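/- Let I ⊆ ℝ be open, t ∈ I, and let x : I → ℝ^d and r : I → [0,∞) be functions. (i) If r(t) > 0 and both x and r are differentiable at t, then d_C((x(s),r(s)), (x(t),r(t)))/|s − t| → ( r'(t)² + r(t)²·|x'(t)|² )^{1/2} as s → t, s ≠ t. (ii) If r(t) = 0 and r is differentiable at t, then d_C((x(s),r(s)), (x(t),r(t)))/|s − t| → |r'(t)| as s → t, s ≠ t, with no assumption on x. -/

import Mathlib

open MeasureTheory Set Filter
open scoped Topology

/-- The ambient Euclidean space `ℝ^d`. -/
noncomputable abbrev Euc (d : ℕ) := EuclideanSpace ℝ (Fin d)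

/-- `cos_π(a) := cos (min |a| π)`. -/
noncomputable def cosPi (a : ℝ) : ℝ := Real.cos (min |a| Real.pi)

/-- The cone distance on `ℝ^d × [0,∞)` (with real-valued radius coordinate):
`d_C((x₀,r₀),(x₁,r₁)) = √(r₀² + r₁² − 2r₀r₁ cos_π(|x₁−x₀|))`. -/
noncomputable def coneDistR {d : ℕ} (z₀ z₁ : Euc d × ℝ) : ℝ :=
  Real.sqrt (z₀.2^2 + z₁.2^2 - 2 * z₀.2 * z₁.2 * cosPi (dist z₁.1 z₀.1))

/-!
Writing `cos_π a = 1 - 2 sin² (min a π / 2)`, the squared cone distance becomes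
`(r₁ - r₀)² + 4 r₀ r₁ sin² (min |x₁ - x₀| π / 2)`. Along the curve, divided by `(s - t)²`, the
first term tends to `r'(t)²`, and since `sin u ~ u` as `u → 0` the second tends to
`r(t)² |x'(t)|²`. At the tip `r(t) = 0` the second term vanishes identically.
-/

open Real

lemma cosPi_eq_one_sub_two_mul_sin_sq (a : ℝ) : cosPi a = 1 - 2 * sin (min |a| π / 2) ^ 2 := by
  rw [cosPi, ← cos_two_mul_eq_one_sub, mul_div_cancel₀ _ two_ne_zero]

lemma coneDistR_eq_sqrt {d : ℕ} (z₀ z₁ : Euc d × ℝ) :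
    coneDistR z₀ z₁ =
      √((z₁.2 - z₀.2) ^ 2 + 4 * z₀.2 * z₁.2 * sin (min (dist z₁.1 z₀.1) π / 2) ^ 2) := by
  rw [coneDistR, cosPi_eq_one_sub_two_mul_sin_sq, abs_of_nonneg dist_nonneg]
  ring_nf

lemma coneDistR_apex {d : ℕ} (z : Euc d × ℝ) (y : Euc d) : coneDistR z (y, 0) = |z.2| := by
  simp [coneDistR_eq_sqrt, sqrt_sq_eq_abs]

lemma HasDerivAt.tendsto_dist_div_abs_sub {E : Type*} [NormedAddCommGroup E] [NormedSpace ℝ E]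
    {f : ℝ → E} {f' : E} {t : ℝ} (hf : HasDerivAt f f' t) :
    Tendsto (fun s => dist (f t) (f s) / |s - t|) (𝓝[≠] t) (𝓝 ‖f'‖) := by
  refine (hasDerivAt_iff_tendsto_slope.1 hf).norm.congr fun s => ?_
  rw [slope_def_module, norm_smul, norm_inv, norm_eq_abs, dist_comm, dist_eq_norm, div_eq_inv_mul]

lemma Filter.Tendsto.sin_div {α : Type*} {l : Filter α} {g h : α → ℝ} {L : ℝ}
    (hg : Tendsto g l (𝓝 0)) (hgh : Tendsto (fun s => g s / h s) l (𝓝 L)) :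
    Tendsto (fun s => sin (g s) / h s) l (𝓝 L) := by
  have hsinc : Tendsto (fun s => sinc (g s)) l (𝓝 1) := by
    have := (continuous_sinc.tendsto 0).comp hg
    rwa [sinc_zero] at this
  refine (by simpa using hsinc.mul hgh : Tendsto _ l (𝓝 L)).congr fun s => ?_
  rcases eq_or_ne (g s) 0 with h0 | h0
  · simp [h0]
  · rw [sinc_of_ne_zero h0]
    field_simp

theorem tendsto_coneDistR_div_abs_sub {d : ℕ} {x : ℝ → Euc d} {r : ℝ → ℝ} {x' : Euc d}
    {r' t : ℝ} (hx : HasDerivAt x x' t) (hr : HasDerivAt r r' t) :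
    Tendsto (fun s => coneDistR (x s, r s) (x t, r t) / |s - t|) (𝓝[≠] t)
      (𝓝 √(r' ^ 2 + r t ^ 2 * ‖x'‖ ^ 2)) := by
  set θ : ℝ → ℝ := fun s => min (dist (x t) (x s)) π with hθ_def
  have hdist : Tendsto (fun s => dist (x t) (x s)) (𝓝 t) (𝓝 0) := by
    simpa using (tendsto_const_nhds (x := x t)).dist hx.continuousAt.tendsto
  have hθ : Tendsto (fun s => θ s / 2) (𝓝[≠] t) (𝓝 0) := by
    have := ((hdist.min (tendsto_const_nhds (x := π))).div_const 2).mono_left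
      (nhdsWithin_le_nhds (s := {t}ᶜ))
    rwa [min_eq_left pi_pos.le, zero_div] at this
  have hθ_div : Tendsto (fun s => θ s / 2 / |s - t|) (𝓝[≠] t) (𝓝 (‖x'‖ / 2)) := by
    refine (hx.tendsto_dist_div_abs_sub.div_const 2).congr' ?_
    filter_upwards [nhdsWithin_le_nhds (hdist.eventually (eventually_lt_nhds pi_pos))]
      with s hs
    simp only [hθ_def, min_eq_left hs.le, div_right_comm]
  have hlim := ((hasDerivAt_iff_tendsto_slope.1 hr).pow 2).add
    ((((hr.continuousAt.tendsto.mono_left nhdsWithin_le_nhds).const_mul 4).mul_const (r t)).mul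
      ((hθ.sin_div hθ_div).pow 2)) |>.sqrt
  rw [show r' ^ 2 + 4 * r t * r t * (‖x'‖ / 2) ^ 2 = r' ^ 2 + r t ^ 2 * ‖x'‖ ^ 2 by ring] at hlim
  refine hlim.congr fun s => ?_
  rw [slope_def_field, div_pow, div_pow, sq_abs, coneDistR_eq_sqrt, ← sqrt_sq_eq_abs,
    ← sqrt_div' _ (sq_nonneg _)]
  congr 1
  field_simp
  ring

theorem tendsto_coneDistR_apex_div_abs_sub {d : ℕ} {x : ℝ → Euc d} {r : ℝ → ℝ} {r' t : ℝ}
    (hr0 : r t = 0) (hr : HasDerivAt r r' t) :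
    Tendsto (fun s => coneDistR (x s, r s) (x t, r t) / |s - t|) (𝓝[≠] t) (𝓝 |r'|) := by
  refine (hasDerivAt_iff_tendsto_slope.1 hr).abs.congr fun s => ?_
  rw [hr0, coneDistR_apex, slope_def_field, hr0, sub_zero, abs_div]

theorem coneDist_metric_derivative_general {d : ℕ} (t : ℝ) (x : ℝ → Euc d) (r : ℝ → ℝ) :
    ((∀ (x' : Euc d) (r' : ℝ), 0 < r t → HasDerivAt x x' t → HasDerivAt r r' t →
      Tendsto (fun s => coneDistR (x s, r s) (x t, r t) / |s - t|) (𝓝[≠] t)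
        (𝓝 (Real.sqrt (r'^2 + (r t)^2 * ‖x'‖^2)))) ∧
     (∀ r' : ℝ, r t = 0 → HasDerivAt r r' t →
      Tendsto (fun s => coneDistR (x s, r s) (x t, r t) / |s - t|) (𝓝[≠] t)
        (𝓝 |r'|))) :=
  ⟨fun _ _ _ hx hr => tendsto_coneDistR_div_abs_sub hx hr,
    fun _ hr0 hr => tendsto_coneDistR_apex_div_abs_sub hr0 hr⟩

/-- Pointwise metric-derivative formula for curves in the cone.
Let `I ⊆ ℝ` be open, `t ∈ I`, `x : I → ℝ^d`, `r : I → [0,∞)`.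
(i) If `r t > 0` and `x, r` are differentiable at `t`, then
`d_C((x s, r s), (x t, r t))/|s − t| → √(r'(t)² + r(t)²|x'(t)|²)` as `s → t`, `s ≠ t`.
(ii) If `r t = 0` and `r` is differentiable at `t`, then the same quotient tends to
`|r'(t)|`, with no assumption on `x`. -/
theorem coneDist_metric_derivative {d : ℕ} (I : Set ℝ) (hI : IsOpen I) (t : ℝ)
    (ht : t ∈ I) (x : ℝ → Euc d) (r : ℝ → ℝ) (hr : ∀ s ∈ I, 0 ≤ r s) :
    ((∀ (x' : Euc d) (r' : ℝ), 0 < r t → HasDerivAt x x' t → HasDerivAt r r' t →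
      Tendsto (fun s => coneDistR (x s, r s) (x t, r t) / |s - t|) (𝓝[≠] t)
        (𝓝 (Real.sqrt (r'^2 + (r t)^2 * ‖x'‖^2)))) ∧
     (∀ r' : ℝ, r t = 0 → HasDerivAt r r' t →
      Tendsto (fun s => coneDistR (x s, r s) (x t, r t) / |s - t|) (𝓝[≠] t)
        (𝓝 |r'|))) :=
  coneDist_metric_derivative_general t x r
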